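/- Let V be a well-clusterable data matrix: there exist centroids c₁,…,c_k, constants β > 0, λ ∈ [0,1], η with ‖v_i‖² ≤ η for all rows, such that at least λN rows satisfy d(v_i, c_{ℓ(v_i)}) ≤ β (where c_{ℓ(v_i)} is the nearest centroid) and all rows satisfy d(v_i, c_{ℓ(v_i)})² ≤ 4η. Let W be the N×d matrix whose i-th row is c_{ℓ(v_i)}, and let V_k be the best rank-k approximation of V in Frobenius norm. Then ‖V − V_k‖_F² ≤ (λβ² + (1−λ)4η)·‖V‖_F², provided all rows of V have norm at least 1. -/

import Mathlib

/-! The matrix `W` whose `i`-th row is the centroid `c (ℓ i)` has at most `k` distinct rows, hence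
rank at most `k`, so `‖V - Vk‖_F² ≤ ‖V - W‖_F²`. Row by row, `‖V - W‖_F²` is at most `β²` on the
`λN` good rows and `4η` on the rest, which totals `(λβ² + (1-λ)4η)N`, and `N ≤ ‖V‖_F²` because
every row has norm at least `1`. -/

open Finset in
theorem Finset.sum_le_of_card_mul_le_card {ι : Type*} [Fintype ι] (f : ι → ℝ) (S : Finset ι)
    {a b lam : ℝ} (hlam : 0 ≤ lam) (hcard : lam * Fintype.card ι ≤ #S)
    (hS : ∀ i ∈ S, f i ≤ a) (hall : ∀ i, f i ≤ b) :
    ∑ i, f i ≤ (lam * a + (1 - lam) * b) * Fintype.card ι := by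
  classical
  set n : ℝ := (Fintype.card ι : ℝ)
  -- nothing relates `a` and `b`, so on `S` the better of the two bounds is used
  set m := min a b
  have hSm : ∑ i ∈ S, f i ≤ #S * m := by
    simpa using sum_le_card_nsmul S f m fun i hi => le_min (hS i hi) (hall i)
  have hSb : ∑ i ∈ Sᶜ, f i ≤ #Sᶜ * b := by
    simpa using sum_le_card_nsmul Sᶜ f b fun i _ => hall i
  have hcompl : (#Sᶜ : ℝ) = n - #S := by
    rw [card_compl, Nat.cast_sub (card_le_univ S)]
  have hmb : 0 ≤ b - m := sub_nonneg.2 (min_le_right a b)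
  have hma : 0 ≤ lam * n * (a - m) :=
    mul_nonneg (mul_nonneg hlam (Nat.cast_nonneg _)) (sub_nonneg.2 (min_le_left a b))
  calc ∑ i, f i = ∑ i ∈ S, f i + ∑ i ∈ Sᶜ, f i := (sum_add_sum_compl S f).symm
    _ ≤ n * b - #S * (b - m) := by rw [hcompl] at hSb; linarith
    _ ≤ n * b - lam * n * (b - m) := by gcongr
    _ ≤ (lam * a + (1 - lam) * b) * n := by linarith

theorem well_clusterable_low_rank_approx_general
    (N d k : ℕ) (V Vk : Matrix (Fin N) (Fin d) ℝ)
    (c : Fin k → Fin d → ℝ) (ℓ : Fin N → Fin k)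
    (β η lam : ℝ) (hlam0 : 0 ≤ lam) (hlam1 : lam ≤ 1)
    -- at least `λN` rows are `β`-close to their nearest centroid
    (S : Finset (Fin N)) (hScard : lam * N ≤ S.card)
    (hS : ∀ i ∈ S, ∑ j, (V i j - c (ℓ i) j) ^ 2 ≤ β ^ 2)
    -- all rows are within squared distance `4η` of their nearest centroid
    (hall : ∀ i, ∑ j, (V i j - c (ℓ i) j) ^ 2 ≤ 4 * η)
    -- all rows have ℓ₂ norm at least 1
    (hrows : ∀ i, 1 ≤ ∑ j, (V i j) ^ 2)
    -- `Vk` is an optimal rank-`k` approximation of `V` in Frobenius norm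
    (hVk_opt : ∀ B : Matrix (Fin N) (Fin d) ℝ, B.rank ≤ k →
      ∑ i, ∑ j, (V i j - Vk i j) ^ 2 ≤ ∑ i, ∑ j, (V i j - B i j) ^ 2) :
    ∑ i, ∑ j, (V i j - Vk i j) ^ 2 ≤
      (lam * β ^ 2 + (1 - lam) * (4 * η)) * (∑ i, ∑ j, (V i j) ^ 2) := by
  rcases isEmpty_or_nonempty (Fin N) with _ | ⟨⟨i₀⟩⟩
  · simp
  let W : Matrix (Fin N) (Fin d) ℝ := (Matrix.of c).submatrix ℓ id
  have hW : W.rank ≤ k := ((Matrix.of c).rank_submatrix_le ℓ id).trans (Matrix.rank_le_height _)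
  have hη : 0 ≤ 4 * η := (Finset.sum_nonneg fun j _ => sq_nonneg _).trans (hall i₀)
  have hK : 0 ≤ lam * β ^ 2 + (1 - lam) * (4 * η) := by
    have := sub_nonneg.2 hlam1
    positivity
  have hN : (N : ℝ) ≤ ∑ i, ∑ j, (V i j) ^ 2 := by
    simpa using Finset.card_nsmul_le_sum Finset.univ _ 1 fun i _ => hrows i
  calc ∑ i, ∑ j, (V i j - Vk i j) ^ 2 ≤ ∑ i, ∑ j, (V i j - W i j) ^ 2 := hVk_opt W hW
    _ ≤ (lam * β ^ 2 + (1 - lam) * (4 * η)) * Fintype.card (Fin N) :=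
      Finset.sum_le_of_card_mul_le_card _ S hlam0 (by rwa [Fintype.card_fin]) hS hall
    _ = (lam * β ^ 2 + (1 - lam) * (4 * η)) * N := by rw [Fintype.card_fin]
    _ ≤ _ := mul_le_mul_of_nonneg_left hN hK

/-- Well-clusterable datasets have a good rank-`k` approximation:
if at least `λN` rows are within distance `β` of their nearest centroid,
all rows are within squared distance `4η`, and all rows have norm at least 1,
then the best rank-`k` approximation `Vk` of `V` satisfies
`‖V − Vk‖_F² ≤ (λβ² + (1−λ)4η)·‖V‖_F²`. -/
theorem well_clusterable_low_rank_approx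
    (N d k : ℕ) (V Vk : Matrix (Fin N) (Fin d) ℝ)
    (c : Fin k → Fin d → ℝ) (ℓ : Fin N → Fin k)
    (β η lam : ℝ) (hβ : 0 < β) (hlam0 : 0 ≤ lam) (hlam1 : lam ≤ 1)
    -- `c (ℓ i)` is the centroid nearest to row `i`
    (hnear : ∀ i m, ∑ j, (V i j - c (ℓ i) j) ^ 2 ≤ ∑ j, (V i j - c m j) ^ 2)
    -- at least `λN` rows are `β`-close to their nearest centroid
    (S : Finset (Fin N)) (hScard : lam * N ≤ S.card)
    (hS : ∀ i ∈ S, ∑ j, (V i j - c (ℓ i) j) ^ 2 ≤ β ^ 2)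
    -- all rows are within squared distance `4η` of their nearest centroid
    (hall : ∀ i, ∑ j, (V i j - c (ℓ i) j) ^ 2 ≤ 4 * η)
    -- all rows have ℓ₂ norm at least 1
    (hrows : ∀ i, 1 ≤ ∑ j, (V i j) ^ 2)
    -- `Vk` is an optimal rank-`k` approximation of `V` in Frobenius norm
    (hVk_rank : Vk.rank ≤ k)
    (hVk_opt : ∀ B : Matrix (Fin N) (Fin d) ℝ, B.rank ≤ k →
      ∑ i, ∑ j, (V i j - Vk i j) ^ 2 ≤ ∑ i, ∑ j, (V i j - B i j) ^ 2) :
    ∑ i, ∑ j, (V i j - Vk i j) ^ 2 ≤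
      (lam * β ^ 2 + (1 - lam) * (4 * η)) * (∑ i, ∑ j, (V i j) ^ 2) :=
  well_clusterable_low_rank_approx_general N d k V Vk c ℓ β η lam hlam0 hlam1 S hScard hS hall hrows
    hVk_opt
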